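/- For every natural number m ≥ 1 and every real x with −1/2 < x < 1/2, one has P_m(x) < cos(πx). -/

import Mathlib

/-!
With `c = π²(1/4 − x²)` one has `−(πx)² = c − π²/4`. Expanding `(c − π²/4)ⁿ` binomially inside the
Taylor series of `cos` and regrouping by powers of `c` (legitimate by absolute convergence) gives
`cos(πx) = Σ_j t_j c^j` for every real `x`. At `x = 1/2` this yields `t_0 = cos(π/2) = 0`. For
`j ≥ 1` the series `t_j` alternates with term ratio `π² / (8(k+1)(2j+2k+1)) < 1`, so
`t_j ≥ a_{j,0} + a_{j,1} > 0`. Hence `cos(πx) − P_m(x) = Σ_{j>m} t_j c^j > 0` whenever `c > 0`.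
-/

open Real

/-- The summand `a_{j,k} = (-π²/4)^k / (2j+2k)! · C(j+k, j)`. -/
noncomputable def a (j k : ℕ) : ℝ :=
  (-(π ^ 2) / 4) ^ k / (Nat.factorial (2 * j + 2 * k)) * (Nat.choose (j + k) j)

/-- `t_j = Σ_{k=0}^∞ a_{j,k}`. -/
noncomputable def t (j : ℕ) : ℝ := ∑' k : ℕ, a j k

/-- `P_m(x) = Σ_{j=1}^m t_j π^{2j} (1/4 − x²)^j`. -/
noncomputable def P (m : ℕ) (x : ℝ) : ℝ :=
  ∑ j ∈ Finset.Icc 1 m, t j * π ^ (2 * j) * (1 / 4 - x ^ 2) ^ j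

open Finset Nat

lemma sum_antidiagonal_choose_mul_pow_mul_pow (w : ℕ → ℝ) (x y : ℝ) (n : ℕ) :
    ∑ p ∈ antidiagonal n, w (p.1 + p.2) * (p.1 + p.2).choose p.1 * x ^ p.1 * y ^ p.2 =
      w n * (x + y) ^ n := by
  rw [(Commute.all x y).add_pow', mul_sum]
  refine sum_congr rfl fun p hp => ?_
  rw [mem_antidiagonal.1 hp, nsmul_eq_mul]
  ring

section BinomialRearrangement

variable {w : ℕ → ℝ} {x y : ℝ}

lemma summable_norm_choose_mul_pow_mul_pow (hw : Summable fun n => |w n| * (|x| + |y|) ^ n) :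
    Summable fun p : ℕ × ℕ => ‖w (p.1 + p.2) * (p.1 + p.2).choose p.1 * x ^ p.1 * y ^ p.2‖ := by
  rw [← HasAntidiagonal.sigmaAntidiagonalEquivProd.summable_iff]
  refine (summable_sigma_of_nonneg fun _ => norm_nonneg _).2 ⟨fun _ => Summable.of_finite, ?_⟩
  refine hw.congr fun n => ?_
  rw [tsum_fintype, univ_eq_attach]
  refine (sum_antidiagonal_choose_mul_pow_mul_pow (fun k => |w k|) |x| |y| n).symm.trans
    ((sum_attach _ _).symm.trans ?_)
  simp

lemma hasSum_choose_mul_pow_mul_pow (hw : Summable fun n => |w n| * (|x| + |y|) ^ n) :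
    HasSum (fun p : ℕ × ℕ => w (p.1 + p.2) * (p.1 + p.2).choose p.1 * x ^ p.1 * y ^ p.2)
      (∑' n, w n * (x + y) ^ n) := by
  obtain ⟨L, hL⟩ := (summable_norm_choose_mul_pow_mul_pow hw).of_norm
  have hσ := HasAntidiagonal.sigmaAntidiagonalEquivProd.hasSum_iff.2 hL
  have hg : HasSum (fun n => w n * (x + y) ^ n) L := hσ.sigma fun n => by
    rw [← sum_antidiagonal_choose_mul_pow_mul_pow, ← sum_attach]
    exact hasSum_fintype _
  rwa [hg.tsum_eq]

end BinomialRearrangement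

lemma summable_abs_inv_factorial_two_mul_mul_pow (r : ℝ) :
    Summable fun n => |((2 * n)! : ℝ)⁻¹| * r ^ n := by
  refine (Real.summable_pow_div_factorial |r|).of_norm_bounded fun n => ?_
  rw [norm_mul, norm_pow, Real.norm_eq_abs, Real.norm_eq_abs, abs_abs, abs_inv, Nat.abs_cast,
    inv_mul_eq_div]
  gcongr
  omega

lemma a_mul_pow (j k : ℕ) (c : ℝ) :
    a j k * c ^ j = ((2 * (j + k))! : ℝ)⁻¹ * (j + k).choose j * c ^ j * (-(π ^ 2) / 4) ^ k := by
  rw [a, mul_add]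
  ring

lemma summable_norm_a_mul_pow (c : ℝ) : Summable fun p : ℕ × ℕ => ‖a p.1 p.2 * c ^ p.1‖ := by
  simp_rw [a_mul_pow]
  exact summable_norm_choose_mul_pow_mul_pow (w := fun n => ((2 * n)! : ℝ)⁻¹)
    (summable_abs_inv_factorial_two_mul_mul_pow _)

lemma hasSum_t_mul_pow (x : ℝ) :
    HasSum (fun j => t j * (π ^ 2 * (1 / 4 - x ^ 2)) ^ j) (cos (π * x)) := by
  set c := π ^ 2 * (1 / 4 - x ^ 2)
  have hcos : ∑' n, ((2 * n)! : ℝ)⁻¹ * (c + -(π ^ 2) / 4) ^ n = cos (π * x) := by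
    rw [cos_eq_tsum]
    refine tsum_congr fun n => ?_
    rw [show c + -(π ^ 2) / 4 = -(π * x) ^ 2 by ring, neg_pow, pow_mul]
    ring
  have h : HasSum (fun p : ℕ × ℕ => a p.1 p.2 * c ^ p.1) (cos (π * x)) := by
    simp_rw [a_mul_pow, ← hcos]
    exact hasSum_choose_mul_pow_mul_pow (w := fun n => ((2 * n)! : ℝ)⁻¹)
      (summable_abs_inv_factorial_two_mul_mul_pow _)
  refine h.prod_fiberwise fun j => ?_
  rw [t, ← tsum_mul_right]
  exact ((summable_norm_a_mul_pow c).prod_factor j).of_norm.hasSum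

lemma t_zero : t 0 = 0 := by
  have h := (hasSum_single 0 fun j hj => by norm_num [hj]).unique (hasSum_t_mul_pow (1 / 2))
  rwa [pow_zero, mul_one, mul_one_div, cos_pi_div_two] at h

lemma abs_a (j k : ℕ) : |a j k| = (π ^ 2 / 4) ^ k / (2 * j + 2 * k)! * (j + k).choose j := by
  rw [a, abs_mul, abs_div, abs_pow, abs_div, abs_neg, Nat.abs_cast, Nat.abs_cast,
    abs_of_nonneg (by positivity : (0 : ℝ) ≤ π ^ 2), abs_of_pos (by norm_num : (0 : ℝ) < 4)]

lemma a_eq_neg_one_pow_mul_abs (j k : ℕ) : a j k = (-1) ^ k * |a j k| := by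
  rw [abs_a, a, neg_div, neg_pow]
  ring

lemma abs_a_succ (j k : ℕ) :
    |a j (k + 1)| * (8 * (k + 1) * (2 * j + 2 * k + 1)) = π ^ 2 * |a j k| := by
  have hfac : ((2 * j + 2 * (k + 1))! : ℝ) =
      (2 * j + 2 * k + 2) * (2 * j + 2 * k + 1) * (2 * j + 2 * k)! := by
    rw [show 2 * j + 2 * (k + 1) = 2 * j + 2 * k + 1 + 1 by ring, factorial_succ, factorial_succ]
    push_cast
    ring
  have hchoose : ((j + k + 1).choose j : ℝ) * (k + 1) = (j + k).choose j * (j + k + 1) := by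
    have h := choose_mul_succ_eq (j + k) j
    rw [show j + k + 1 - j = k + 1 by omega] at h
    exact_mod_cast h.symm
  rw [abs_a, abs_a, hfac, ← add_assoc]
  field_simp
  linear_combination 2 * π ^ 2 * (π ^ 2 / 4) ^ k * hchoose

lemma abs_a_succ_lt {j : ℕ} (hj : 1 ≤ j) (k : ℕ) : |a j (k + 1)| < |a j k| := by
  have hpos : 0 < |a j k| := by
    rw [abs_a]
    exact mul_pos (by positivity) (by exact_mod_cast choose_pos (le_add_right j k))
  have hden : π ^ 2 < 8 * (k + 1) * (2 * j + 2 * k + 1) := by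
    have hj' : (1 : ℝ) ≤ j := by exact_mod_cast hj
    nlinarith [pi_lt_d2, pi_pos, (k.cast_nonneg : (0 : ℝ) ≤ k)]
  have h := abs_a_succ j k
  nlinarith

lemma t_pos {j : ℕ} (hj : 1 ≤ j) : 0 < t j := by
  have hanti : StrictAnti fun k => |a j k| := strictAnti_nat_of_succ_lt (abs_a_succ_lt hj)
  have hsum : Summable fun k => |a j k| := by
    simpa using (summable_norm_a_mul_pow 1).prod_factor j
  have hlim := hsum.tendsto_alternating_series_tsum
  have hle := hanti.antitone.alternating_series_le_tendsto hlim 1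
  have h01 : |a j 1| < |a j 0| := hanti zero_lt_one
  norm_num [sum_range_succ] at hle
  rw [t, tsum_congr (a_eq_neg_one_pow_mul_abs j)]
  linarith

lemma t_nonneg (j : ℕ) : 0 ≤ t j := by
  rcases j.eq_zero_or_pos with rfl | hj
  · exact t_zero.ge
  · exact (t_pos hj).le

lemma P_eq_sum_range (m : ℕ) (x : ℝ) :
    P m x = ∑ j ∈ range (m + 1), t j * (π ^ 2 * (1 / 4 - x ^ 2)) ^ j := by
  rw [sum_range_succ', t_zero, zero_mul, add_zero, P, ← Ico_add_one_right_eq_Icc,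
    sum_Ico_eq_sum_range, add_tsub_cancel_right]
  refine sum_congr rfl fun j _ => ?_
  rw [add_comm 1 j, mul_pow, ← pow_mul, mul_assoc]

theorem P_lt_cos_general (m : ℕ) (x : ℝ) (hx1 : -(1 / 2) < x) (hx2 : x < 1 / 2) :
    P m x < Real.cos (π * x) := by
  set c := π ^ 2 * (1 / 4 - x ^ 2)
  have hc : 0 < c := by
    have : 0 < 1 / 4 - x ^ 2 := by nlinarith
    positivity
  have htail := (hasSum_nat_add_iff' (m + 1)).2 (hasSum_t_mul_pow x)
  rw [← P_eq_sum_range] at htail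
  have hpos := hasSum_lt (f := 0) (g := fun j => t (j + (m + 1)) * c ^ (j + (m + 1))) (i := 0)
    (fun j => mul_nonneg (t_nonneg _) (pow_nonneg hc.le _))
    (mul_pos (t_pos (by omega)) (pow_pos hc _)) hasSum_zero htail
  linarith

/-- For `m ≥ 1` and `−1/2 < x < 1/2`, `P_m(x) < cos(πx)`. -/
theorem P_lt_cos (m : ℕ) (hm : 1 ≤ m) (x : ℝ) (hx1 : -(1 / 2) < x) (hx2 : x < 1 / 2) :
    P m x < Real.cos (π * x) :=
  P_lt_cos_general m x hx1 hx2
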